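/- arXiv:2311.13323 — 3 statements merged into one kernel-verified Lean document; each statement's English description precedes it below -/
import Mathlib

section
/- The largest eigenvalue of the friendship graph F_k is (1 + √(1+8k))/2, for every k ≥ 1. -/
/-- The spectral radius (largest adjacency eigenvalue) of a finite simple graph. -/
noncomputable def specRad {V : Type*} [Fintype V] [DecidableEq V] (G : SimpleGraph V) : ℝ :=
  letI := Classical.decRel G.Adj
  sSup (spectrum ℝ (G.adjMatrix ℝ))

/-- The friendship graph `F_k`: `k` triangles all sharing the vertex `0`.
Vertices `2i+1` and `2i+2` are paired into a triangle with the center `0`. -/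
def friendshipGraph (k : ℕ) : SimpleGraph (Fin (2 * k + 1)) :=
  SimpleGraph.fromRel (fun i j => i.val = 0 ∨ (i.val - 1) / 2 = (j.val - 1) / 2)

namespace FriendAux

open Matrix

/-- the partner of a non-central vertex in its triangle -/
def pair (k : ℕ) (i : Fin (2 * k + 1)) : Fin (2 * k + 1) :=
  ⟨if i.val % 2 = 1 then i.val + 1 else i.val - 1, by
    have := i.isLt; split <;> omega⟩

lemma pair_ne_zero {k : ℕ} {i : Fin (2 * k + 1)} (hi : i ≠ 0) : pair k i ≠ 0 := by
  have hi' : i.val ≠ 0 := fun h => hi (Fin.ext h)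
  simp only [pair, Ne, Fin.ext_iff, Fin.val_zero]
  split <;> omega

lemma pair_ne_self {k : ℕ} {i : Fin (2 * k + 1)} (hi : i ≠ 0) : pair k i ≠ i := by
  have hi' : i.val ≠ 0 := fun h => hi (Fin.ext h)
  simp only [pair, Ne, Fin.ext_iff]
  split <;> omega

lemma pair_pair {k : ℕ} {i : Fin (2 * k + 1)} (hi : i ≠ 0) : pair k (pair k i) = i := by
  have hi' : i.val ≠ 0 := fun h => hi (Fin.ext h)
  have := i.isLt
  simp only [pair, Fin.ext_iff]
  rcases Nat.mod_two_eq_zero_or_one i.val with h | h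
  · have h1 : ¬ (i.val % 2 = 1) := by omega
    have h2 : (i.val - 1) % 2 = 1 := by omega
    simp [h1, h2]; omega
  · have h1 : i.val % 2 = 1 := by omega
    have h2 : ¬ ((i.val + 1) % 2 = 1) := by omega
    simp [h1, h2]

lemma adj_zero {k : ℕ} (j : Fin (2 * k + 1)) :
    (friendshipGraph k).Adj 0 j ↔ j ≠ 0 := by
  simp only [friendshipGraph, SimpleGraph.fromRel_adj, Fin.val_zero, ne_eq]
  constructor
  · rintro ⟨h, -⟩ rfl; exact h rfl
  · intro h; exact ⟨fun e => h e.symm, by tauto⟩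

lemma adj_iff {k : ℕ} {i : Fin (2 * k + 1)} (hi : i ≠ 0) (j : Fin (2 * k + 1)) :
    (friendshipGraph k).Adj i j ↔ j = 0 ∨ j = pair k i := by
  have hi' : i.val ≠ 0 := fun h => hi (Fin.ext h)
  have h1 := i.isLt
  have h2 := j.isLt
  simp only [friendshipGraph, SimpleGraph.fromRel_adj, ne_eq, Fin.ext_iff, Fin.val_zero,
    pair]
  rcases Nat.mod_two_eq_zero_or_one i.val with h | h
  · have hodd : ¬ (i.val % 2 = 1) := by omega
    simp only [hodd, if_false]
    constructor
    · rintro ⟨hne, hr⟩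
      omega
    · intro hr
      omega
  · have hodd : i.val % 2 = 1 := by omega
    simp only [hodd, if_true]
    constructor
    · rintro ⟨hne, hr⟩
      omega
    · intro hr
      omega

variable {k : ℕ} [inst : DecidableRel (friendshipGraph k).Adj]

lemma neighborFinset_zero :
    (friendshipGraph k).neighborFinset 0 = Finset.univ.erase 0 := by
  ext j
  simp [SimpleGraph.mem_neighborFinset, adj_zero]

lemma neighborFinset_ne {i : Fin (2 * k + 1)} (hi : i ≠ 0) :
    (friendshipGraph k).neighborFinset i = {0, pair k i} := by
  ext j
  simp [SimpleGraph.mem_neighborFinset, adj_iff hi]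

lemma mulVec_zero (v : Fin (2 * k + 1) → ℝ) :
    ((friendshipGraph k).adjMatrix ℝ *ᵥ v) 0 = ∑ j ∈ Finset.univ.erase 0, v j := by
  rw [SimpleGraph.adjMatrix_mulVec_apply, neighborFinset_zero]

lemma mulVec_ne (v : Fin (2 * k + 1) → ℝ) {i : Fin (2 * k + 1)} (hi : i ≠ 0) :
    ((friendshipGraph k).adjMatrix ℝ *ᵥ v) i = v 0 + v (pair k i) := by
  rw [SimpleGraph.adjMatrix_mulVec_apply, neighborFinset_ne hi,
    Finset.sum_pair (Ne.symm (pair_ne_zero hi))]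

/-- If `μ` is an eigenvalue then `μ ∈ {1, -1}` or `μ² - μ - 2k = 0`. -/
lemma eigen_cases (hk : 1 ≤ k) {μ : ℝ} (hμ : μ ∈ spectrum ℝ ((friendshipGraph k).adjMatrix ℝ)) :
    μ = 1 ∨ μ = -1 ∨ μ * μ - μ - 2 * k = 0 := by
  rw [spectrum.mem_iff] at hμ
  rw [Matrix.isUnit_iff_isUnit_det, isUnit_iff_ne_zero, not_not,
    ← Matrix.exists_mulVec_eq_zero_iff] at hμ
  obtain ⟨v, hv, hAv⟩ := hμ
  have hAv' : ∀ i, μ * v i = ((friendshipGraph k).adjMatrix ℝ *ᵥ v) i := by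
    intro i
    have := congrFun hAv i
    simp only [Matrix.sub_mulVec, Pi.sub_apply, Pi.zero_apply, sub_eq_zero] at this
    have h2 : ((algebraMap ℝ (Matrix (Fin (2 * k + 1)) (Fin (2 * k + 1)) ℝ) μ) *ᵥ v) i
        = μ * v i := by
      simp [Algebra.algebraMap_eq_smul_one, Matrix.smul_mulVec, Matrix.one_mulVec, smul_eq_mul, mul_ite, mul_one]
    rw [← h2, this]
  by_cases h1 : μ = 1
  · exact Or.inl h1
  by_cases h2 : μ = -1
  · exact Or.inr (Or.inl h2)
  refine Or.inr (Or.inr ?_)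
  -- eigen-equations for non-central vertices
  have heq : ∀ i : Fin (2 * k + 1), i ≠ 0 → μ * v i = v 0 + v (pair k i) := by
    intro i hi
    rw [hAv' i, mulVec_ne v hi]
  -- partners have equal values
  have hpeq : ∀ i : Fin (2 * k + 1), i ≠ 0 → v i = v (pair k i) := by
    intro i hi
    have e1 := heq i hi
    have e2 := heq (pair k i) (pair_ne_zero hi)
    rw [pair_pair hi] at e2
    have : (μ + 1) * (v i - v (pair k i)) = 0 := by ring_nf; linarith
    rcases mul_eq_zero.mp this with h | h
    · exact absurd (by linarith) h2
    · linarith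
  -- each non-central value satisfies (μ - 1) v i = v 0
  have hval : ∀ i : Fin (2 * k + 1), i ≠ 0 → (μ - 1) * v i = v 0 := by
    intro i hi
    have e1 := heq i hi
    have e2 := hpeq i hi
    rw [← e2] at e1
    linarith
  have hμ1 : μ - 1 ≠ 0 := sub_ne_zero.mpr h1
  have hv0 : v 0 ≠ 0 := by
    intro h0
    apply hv
    funext i
    by_cases hi : i = 0
    · rw [hi, h0]; rfl
    · have := hval i hi
      rw [h0] at this
      have := mul_eq_zero.mp this
      simp only [Pi.zero_apply]
      tauto
  -- center equation
  have hcenter : μ * v 0 = ∑ j ∈ Finset.univ.erase (0 : Fin (2 * k + 1)), v j := by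
    rw [hAv' 0, mulVec_zero]
  have hsum : ∑ j ∈ Finset.univ.erase (0 : Fin (2 * k + 1)), v j
      = (2 * k : ℝ) * (v 0 / (μ - 1)) := by
    rw [Finset.sum_congr rfl (fun j hj => ?_), Finset.sum_const, nsmul_eq_mul]
    · congr 1
      rw [Finset.card_erase_of_mem (Finset.mem_univ _), Finset.card_univ, Fintype.card_fin]
      push_cast
      ring
    · have hj0 : j ≠ 0 := (Finset.mem_erase.mp hj).1
      have := hval j hj0
      field_simp
      linarith
  rw [hsum] at hcenter
  have : μ * v 0 * (μ - 1) = 2 * k * v 0 := by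
    rw [hcenter]; field_simp
  have key : (μ * μ - μ - 2 * k) * v 0 = 0 := by ring_nf; nlinarith [this]
  rcases mul_eq_zero.mp key with h | h
  · exact h
  · exact absurd h hv0

/-- The top eigenvalue is in the spectrum. -/
lemma top_mem (hk : 1 ≤ k) :
    (1 + Real.sqrt (1 + 8 * k)) / 2 ∈ spectrum ℝ ((friendshipGraph k).adjMatrix ℝ) := by
  set s : ℝ := Real.sqrt (1 + 8 * k) with hs
  have hs2 : s ^ 2 = 1 + 8 * k := Real.sq_sqrt (by positivity)
  have hs0 : 0 ≤ s := Real.sqrt_nonneg _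
  set lam : ℝ := (1 + s) / 2 with hlam
  have hquad : lam * lam - lam = 2 * k := by
    rw [hlam]; nlinarith [hs2]
  rw [spectrum.mem_iff, Matrix.isUnit_iff_isUnit_det, isUnit_iff_ne_zero, not_not,
    ← Matrix.exists_mulVec_eq_zero_iff]
  refine ⟨fun i => if i = 0 then lam - 1 else 1, ?_, ?_⟩
  · intro h
    have h10 : (⟨1, by omega⟩ : Fin (2 * k + 1)) ≠ 0 := by
      simp [Fin.ext_iff]
    have := congrFun h ⟨1, by omega⟩
    simp only [if_neg h10, Pi.zero_apply] at this
    exact one_ne_zero this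
  · funext i
    have hmem : ∀ i, ((algebraMap ℝ (Matrix (Fin (2 * k + 1)) (Fin (2 * k + 1)) ℝ) lam)
        *ᵥ (fun i => if i = 0 then lam - 1 else 1)) i
        = lam * (if i = 0 then lam - 1 else 1) := by
      intro i
      simp [Algebra.algebraMap_eq_smul_one, Matrix.smul_mulVec, Matrix.one_mulVec, smul_eq_mul, mul_ite, mul_one]
    simp only [Matrix.sub_mulVec, Pi.sub_apply, Pi.zero_apply, hmem, sub_eq_zero]
    by_cases hi : i = 0
    · subst hi
      rw [mulVec_zero, if_pos rfl]
      rw [Finset.sum_congr rfl (fun j hj => if_neg (Finset.mem_erase.mp hj).1),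
        Finset.sum_const, nsmul_eq_mul,
        Finset.card_erase_of_mem (Finset.mem_univ _), Finset.card_univ, Fintype.card_fin]
      push_cast
      nlinarith [hquad]
    · rw [mulVec_ne _ hi, if_pos rfl, if_neg hi, if_neg (pair_ne_zero hi)]
      ring

end FriendAux

theorem stmt_6 (k : ℕ) (hk : 1 ≤ k) :
    specRad (friendshipGraph k) = (1 + Real.sqrt (1 + 8 * k)) / 2 := by
  unfold specRad
  set s : ℝ := Real.sqrt (1 + 8 * k) with hs
  have hs2 : s ^ 2 = 1 + 8 * k := Real.sq_sqrt (by positivity)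
  have hs3 : 3 ≤ s := by
    rw [hs, show (3 : ℝ) = Real.sqrt 9 by
      rw [show (9 : ℝ) = 3 ^ 2 by norm_num, Real.sqrt_sq (by norm_num)]]
    apply Real.sqrt_le_sqrt
    have : (1 : ℝ) ≤ k := by exact_mod_cast hk
    linarith
  letI := Classical.decRel (friendshipGraph k).Adj
  apply IsGreatest.csSup_eq
  constructor
  · exact FriendAux.top_mem hk
  · intro μ hμ
    rcases FriendAux.eigen_cases hk hμ with h | h | h
    · rw [h]; linarith
    · rw [h]; linarith
    · nlinarith [h, hs2]
end

section
/- The multiset of eigenvalues of the adjacency matrix of the friendship graph F_k is {(1+√(1+8k))/2, (1−√(1+8k))/2} together with 1 with multiplicity k−1 and −1 with multiplicity k. -/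
/-- The adjacency matrix of the friendship graph `F_k` over `ℝ`. -/
noncomputable def friendshipAdj (k : ℕ) : Matrix (Fin (2 * k + 1)) (Fin (2 * k + 1)) ℝ :=
  letI := Classical.decRel (friendshipGraph k).Adj
  (friendshipGraph k).adjMatrix ℝ

/-!
Explicit eigenvectors bound the multiplicities from below. With `e₀` the centre and `sₚ`, `dₚ` the
sum and difference of the two indicator vectors of the `p`-th triangle, `(μ - 1) • e₀ + ∑ₚ sₚ` has
eigenvalue `μ` whenever `μ (μ - 1) = 2k`, the `k` vectors `dₚ` have eigenvalue `-1`, and the `k - 1`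
vectors `s₀ - sₚ` have eigenvalue `1`. Since `μ₊ = (1 + √(1 + 8k)) / 2 ≥ 2`, this accounts for
`2k` of the `2k + 1` eigenvalues, and the last one is forced by `trace A = 0` to be `1 - μ₊ = μ₋`
(this also covers `k = 1`, where `μ₋ = -1`).
-/

open Matrix

theorem Matrix.IsHermitian.card_le_count_eigenvalues {n ι : Type*} [Fintype n] [DecidableEq n]
    [Fintype ι] {A : Matrix n n ℝ} (hA : A.IsHermitian) {μ : ℝ} {v : ι → n → ℝ}
    (hv : LinearIndependent ℝ v) (hAv : ∀ i, A *ᵥ v i = μ • v i) :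
    Fintype.card ι ≤ (Finset.univ.val.map hA.eigenvalues).count μ := by
  calc Fintype.card ι = Module.finrank ℝ (Submodule.span ℝ (Set.range v)) :=
        (finrank_span_eq_card hv).symm
    _ ≤ Module.finrank ℝ (Module.End.eigenspace (toLin' A) μ) :=
        Submodule.finrank_mono <| Submodule.span_le.2 <| Set.range_subset_iff.2 fun i =>
          Module.End.mem_eigenspace_iff.2 (hAv i)
    _ ≤ (toLin' A).charpoly.rootMultiplicity μ := LinearMap.finrank_eigenspace_le _ _
    _ = (Finset.univ.val.map hA.eigenvalues).count μ := by
        rw [Matrix.charpoly_toLin', ← Polynomial.count_roots, hA.roots_charpoly_eq_eigenvalues]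
        simp

theorem Matrix.IsHermitian.sum_eigenvalues_eq_trace {n : Type*} [Fintype n] [DecidableEq n]
    {A : Matrix n n ℝ} (hA : A.IsHermitian) :
    (Finset.univ.val.map hA.eigenvalues).sum = A.trace := by
  rw [hA.trace_eq_sum_eigenvalues, Finset.sum_map_val]
  simp

theorem Multiset.eq_cons_of_le_of_card_eq_succ {α : Type*} [AddCommGroup α] {s t : Multiset α}
    (hle : t ≤ s) (hcard : card s = card t + 1) : s = (s.sum - t.sum) ::ₘ t := by
  obtain ⟨u, rfl⟩ := Multiset.le_iff_exists_add.1 hle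
  obtain ⟨x, rfl⟩ := Multiset.card_eq_one.1 (by simpa using hcard)
  rw [Multiset.sum_add, Multiset.sum_singleton, add_sub_cancel_left, add_comm,
    Multiset.singleton_add]

theorem LinearIndependent.of_apply_diagonal {ι κ K : Type*} [Fintype ι] [Field K]
    {v : ι → κ → K} (p : ι → κ) (hdiag : ∀ i, v i (p i) ≠ 0)
    (hoff : ∀ i j, i ≠ j → v j (p i) = 0) : LinearIndependent K v := by
  classical
  refine Fintype.linearIndependent_iff.2 fun g hg i => ?_
  have := congrFun hg (p i)
  simp only [Finset.sum_apply, Pi.smul_apply, smul_eq_mul, Pi.zero_apply] at this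
  rw [Finset.sum_eq_single i (fun j _ hji => by rw [hoff i j (Ne.symm hji), mul_zero])
    (by simp)] at this
  exact (mul_eq_zero.1 this).resolve_right (hdiag i)

lemma friendshipAdj_apply (k : ℕ) (i j : Fin (2 * k + 1)) :
    friendshipAdj k i j =
      if i.val ≠ j.val ∧ (i.val = 0 ∨ j.val = 0 ∨ (i.val - 1) / 2 = (j.val - 1) / 2) then 1
      else 0 := by
  classical
  have hadj : (friendshipGraph k).Adj i j ↔
      i.val ≠ j.val ∧ (i.val = 0 ∨ j.val = 0 ∨ (i.val - 1) / 2 = (j.val - 1) / 2) := by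
    rw [friendshipGraph, SimpleGraph.fromRel_adj, ne_eq, Fin.ext_iff]
    tauto
  rw [friendshipAdj, SimpleGraph.adjMatrix_apply]
  exact if_congr hadj rfl rfl

namespace friendshipGraph

variable (k : ℕ)

def pairSum (p : Fin k) : Fin (2 * k + 1) → ℝ :=
  Pi.single ⟨2 * p + 1, by omega⟩ 1 + Pi.single ⟨2 * p + 2, by omega⟩ 1

def pairDiff (p : Fin k) : Fin (2 * k + 1) → ℝ :=
  Pi.single ⟨2 * p + 1, by omega⟩ 1 - Pi.single ⟨2 * p + 2, by omega⟩ 1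

def centreVec (c : ℝ) : Fin (2 * k + 1) → ℝ :=
  c • Pi.single 0 1 + ∑ p, pairSum k p

variable {k}

lemma mulVec_pairDiff (p : Fin k) : friendshipAdj k *ᵥ pairDiff k p = -pairDiff k p := by
  funext j
  simp only [pairDiff, mulVec_sub, mulVec_single_one, Pi.sub_apply, Pi.neg_apply, col_apply,
    friendshipAdj_apply, Pi.single_apply, Fin.ext_iff, Nat.add_one_ne_zero, false_or,
    add_tsub_cancel_right]
  have := p.isLt
  split_ifs <;> first | (exfalso; omega) | norm_num

lemma mulVec_pairSum (p : Fin k) :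
    friendshipAdj k *ᵥ pairSum k p = Pi.single 0 2 + pairSum k p := by
  funext j
  simp only [pairSum, mulVec_add, mulVec_single_one, Pi.add_apply, col_apply,
    friendshipAdj_apply, Pi.single_apply, Fin.ext_iff, Fin.val_zero, Nat.add_one_ne_zero, false_or,
    add_tsub_cancel_right]
  have := p.isLt
  split_ifs <;> first | (exfalso; omega) | norm_num

lemma mulVec_pairSum_sub (p q : Fin k) :
    friendshipAdj k *ᵥ (pairSum k p - pairSum k q) = pairSum k p - pairSum k q := by
  rw [mulVec_sub, mulVec_pairSum, mulVec_pairSum, add_sub_add_left_eq_sub]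

lemma mulVec_single_zero : friendshipAdj k *ᵥ Pi.single 0 1 = ∑ p, pairSum k p := by
  funext j
  obtain ⟨j, hj⟩ := j
  rw [mulVec_single_one, col_apply, Finset.sum_apply, friendshipAdj_apply]
  rcases Nat.eq_zero_or_pos j with rfl | hj0
  · simp [pairSum, Fin.ext_iff]
  · rw [Finset.sum_eq_single ⟨(j - 1) / 2, by omega⟩]
    · simp only [pairSum, Pi.add_apply, Pi.single_apply, Fin.ext_iff, Fin.val_zero,
        true_or, or_true, and_true]
      split_ifs <;> first | (exfalso; omega) | norm_num
    · intro p _ hp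
      simp only [pairSum, Pi.add_apply, Pi.single_apply, Fin.ext_iff, ne_eq] at hp ⊢
      split_ifs <;> first | (exfalso; omega) | norm_num
    · simp

lemma mulVec_centreVec {μ : ℝ} (hμ : μ * (μ - 1) = 2 * k) :
    friendshipAdj k *ᵥ centreVec k (μ - 1) = μ • centreVec k (μ - 1) := by
  have hsingle : (Pi.single 0 2 : Fin (2 * k + 1) → ℝ) = (2 : ℝ) • Pi.single 0 1 := by
    rw [← Pi.single_smul', smul_eq_mul, mul_one]
  simp only [centreVec, mulVec_add, mulVec_smul, mulVec_single_zero, mulVec_sum, mulVec_pairSum,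
    Finset.sum_add_distrib, Finset.sum_const, Finset.card_univ, Fintype.card_fin, hsingle]
  linear_combination (norm := module) -hμ • (Pi.single 0 1 : Fin (2 * k + 1) → ℝ)

lemma centreVec_ne_zero {c : ℝ} (hc : c ≠ 0) : centreVec k c ≠ 0 := fun h =>
  hc (by simpa [centreVec, pairSum, Fin.ext_iff] using congrFun h 0)

lemma linearIndependent_pairDiff : LinearIndependent ℝ (pairDiff k) := by
  refine .of_apply_diagonal (fun i => ⟨2 * i + 1, by omega⟩) (fun i => ?_) fun i j hij => ?_
  · simp [pairDiff]
  · have := Fin.val_ne_of_ne hij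
    simp only [pairDiff, Pi.sub_apply, Pi.single_apply, Fin.ext_iff]
    split_ifs <;> first | (exfalso; omega) | norm_num

lemma linearIndependent_pairSum_sub :
    LinearIndependent ℝ fun i : Fin (k - 1) =>
      pairSum k ⟨0, by have := i.isLt; omega⟩ - pairSum k ⟨i + 1, by omega⟩ := by
  refine .of_apply_diagonal (fun i => ⟨2 * i + 3, by omega⟩) (fun i => ?_) fun i j hij => ?_
  · simp only [pairSum, Pi.sub_apply, Pi.add_apply, Pi.single_apply, Fin.ext_iff]
    split_ifs <;> first | (exfalso; omega) | norm_num
  · have := Fin.val_ne_of_ne hij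
    simp only [pairSum, Pi.sub_apply, Pi.add_apply, Pi.single_apply, Fin.ext_iff]
    split_ifs <;> first | (exfalso; omega) | norm_num

lemma le_map_eigenvalues (hA : (friendshipAdj k).IsHermitian) {μ : ℝ}
    (hμ : μ * (μ - 1) = 2 * k) (hμ2 : 2 ≤ μ) :
    μ ::ₘ (Multiset.replicate (k - 1) 1 + Multiset.replicate k (-1)) ≤
      Finset.univ.val.map hA.eigenvalues := by
  have hcentre : 1 ≤ (Finset.univ.val.map hA.eigenvalues).count μ := by
    have hne := centreVec_ne_zero (k := k) (by linarith : (0 : ℝ) < μ - 1).ne'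
    simpa only [Fintype.card_unit] using hA.card_le_count_eigenvalues (ι := Unit)
      (linearIndependent_unique_iff.2 hne) fun _ => mulVec_centreVec hμ
  have hone : k - 1 ≤ (Finset.univ.val.map hA.eigenvalues).count 1 := by
    simpa only [Fintype.card_fin] using hA.card_le_count_eigenvalues linearIndependent_pairSum_sub
      fun i => by rw [mulVec_pairSum_sub, one_smul]
  have hneg : k ≤ (Finset.univ.val.map hA.eigenvalues).count (-1) := by
    simpa only [Fintype.card_fin] using hA.card_le_count_eigenvalues linearIndependent_pairDiff
      fun p => by rw [mulVec_pairDiff, neg_one_smul]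
  refine Multiset.le_iff_count.2 fun x => ?_
  simp only [Multiset.count_cons, Multiset.count_add, Multiset.count_replicate]
  split_ifs <;> grind

end friendshipGraph

theorem stmt_7 (k : ℕ) (hk : 1 ≤ k) (h : (friendshipAdj k).IsHermitian) :
    (Finset.univ.val.map h.eigenvalues) =
      ({(1 + Real.sqrt (1 + 8 * k)) / 2, (1 - Real.sqrt (1 + 8 * k)) / 2} : Multiset ℝ) +
        Multiset.replicate (k - 1) 1 + Multiset.replicate k (-1) := by
  set M := Finset.univ.val.map h.eigenvalues
  set s := Real.sqrt (1 + 8 * k)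
  set a := (1 + s) / 2 with ha_def
  have hs : s ^ 2 = 1 + 8 * k := Real.sq_sqrt (by positivity)
  have hs3 : 3 ≤ s := by
    nlinarith [Real.sqrt_nonneg (1 + 8 * (k : ℝ)), (Nat.one_le_cast.2 hk : (1 : ℝ) ≤ k)]
  have ha : a * (a - 1) = 2 * k := by linear_combination hs / 4
  set T := a ::ₘ (Multiset.replicate (k - 1) 1 + Multiset.replicate k (-1))
  have hle : T ≤ M := friendshipGraph.le_map_eigenvalues h ha (by linarith)
  have hcard : M.card = T.card + 1 := by
    simp only [M, T, Multiset.card_map, Finset.card_val, Finset.card_univ, Fintype.card_fin,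
      Multiset.card_cons, Multiset.card_add, Multiset.card_replicate]
    omega
  have hsum : M.sum = 0 := by
    rw [h.sum_eigenvalues_eq_trace, friendshipAdj, SimpleGraph.trace_adjMatrix]
  have hsumT : T.sum = a - 1 := by
    simp only [T, Multiset.sum_cons, Multiset.sum_add, Multiset.sum_replicate, nsmul_eq_mul,
      smul_neg, Nat.cast_sub hk, Nat.cast_one]
    ring
  rw [Multiset.eq_cons_of_le_of_card_eq_succ hle hcard, hsum, hsumT,
    show 0 - (a - 1) = (1 - s) / 2 by ring]
  simp [T, Multiset.cons_swap]
end

section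
/- If B is an equitable quotient matrix of a nonnegative irreducible symmetric real matrix M, then the largest eigenvalue of B equals the largest eigenvalue of M. -/
/-!
Let `P` be the `0/1` matrix of the partition map `p`; equitability says `M * P = P * B`. Hence
`w ↦ P *ᵥ w` sends eigenvectors of `B` to eigenvectors of `M` (nonzero ones, as `p` is onto), so
`spectrum B ⊆ spectrum M`. Conversely, let `λ` be the largest eigenvalue of `M`, with eigenvector
`x`. As `λ • 1 - M` is positive semidefinite and `M ≥ 0` entrywise, `|x|` has Rayleigh quotient at
least `λ`, so it is again a `λ`-eigenvector. Its fibre sums `|x| ᵥ* P` are nonnegative and not all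
zero, and by symmetry of `M` they form a left `λ`-eigenvector of `B`; thus `λ ∈ spectrum B`.
-/

open Finset Matrix

namespace Matrix

section Spectrum

variable {ι K : Type*} [Fintype ι] [DecidableEq ι] [Field K]

theorem mem_spectrum_iff_exists_mulVec_eq_smul (A : Matrix ι ι K) (μ : K) :
    μ ∈ spectrum K A ↔ ∃ v ≠ 0, A *ᵥ v = μ • v := by
  rw [spectrum.mem_iff, isUnit_iff_isUnit_det, isUnit_iff_ne_zero, not_not,
    ← exists_mulVec_eq_zero_iff]
  simp only [Algebra.algebraMap_eq_smul_one, sub_mulVec, smul_mulVec, one_mulVec, sub_eq_zero,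
    eq_comm]

theorem mem_spectrum_iff_exists_vecMul_eq_smul (A : Matrix ι ι K) (μ : K) :
    μ ∈ spectrum K A ↔ ∃ v ≠ 0, v ᵥ* A = μ • v := by
  rw [spectrum.mem_iff, isUnit_iff_isUnit_det, isUnit_iff_ne_zero, not_not,
    ← exists_vecMul_eq_zero_iff]
  simp only [Algebra.algebraMap_eq_smul_one, vecMul_sub, vecMul_smul, vecMul_one, sub_eq_zero,
    eq_comm]

end Spectrum

section Real

variable {ι : Type*} [Fintype ι]

theorem IsHermitian.posSemidef_smul_one_sub [DecidableEq ι] {A : Matrix ι ι ℝ}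
    (hA : A.IsHermitian) {c : ℝ} (hc : ∀ μ ∈ spectrum ℝ A, μ ≤ c) : (c • 1 - A).PosSemidef := by
  rw [posSemidef_iff_isHermitian_and_spectrum_nonneg]
  refine ⟨(isHermitian_one.smul (IsSelfAdjoint.all c)).sub hA, ?_⟩
  rw [← Algebra.algebraMap_eq_smul_one, ← spectrum.singleton_sub_eq]
  rintro _ ⟨_, rfl, μ, hμ, rfl⟩
  simpa using hc μ hμ

theorem dotProduct_mulVec_le_abs {A : Matrix ι ι ℝ} (hA : ∀ i j, 0 ≤ A i j) (x : ι → ℝ) :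
    x ⬝ᵥ (A *ᵥ x) ≤ |x| ⬝ᵥ (A *ᵥ |x|) := by
  simp only [dotProduct, mulVec, Finset.mul_sum]
  refine sum_le_sum fun i _ => sum_le_sum fun j _ => ?_
  calc x i * (A i j * x j) ≤ |x i * (A i j * x j)| := le_abs_self _
    _ = |x| i * (A i j * |x| j) := by simp [abs_mul, abs_of_nonneg (hA i j)]

theorem exists_nonneg_mulVec_eq_sSup_spectrum_smul [DecidableEq ι] {A : Matrix ι ι ℝ}
    (hA : A.IsSymm) (hA_nonneg : ∀ i j, 0 ≤ A i j) (hne : (spectrum ℝ A).Nonempty) :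
    ∃ y ≠ 0, 0 ≤ y ∧ A *ᵥ y = sSup (spectrum ℝ A) • y := by
  set r := sSup (spectrum ℝ A)
  obtain ⟨x, hx0, hx⟩ :=
    (mem_spectrum_iff_exists_mulVec_eq_smul A r).1 (hne.csSup_mem (finite_spectrum A))
  have hPSD : (r • 1 - A).PosSemidef :=
    IsHermitian.posSemidef_smul_one_sub ((conjTranspose_eq_transpose_of_trivial A).trans hA)
      fun μ hμ => le_csSup (finite_spectrum A).bddAbove hμ
  have quadratic_form (y : ι → ℝ) :
      y ⬝ᵥ ((r • 1 - A) *ᵥ y) = r * (y ⬝ᵥ y) - y ⬝ᵥ (A *ᵥ y) := by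
    rw [sub_mulVec, dotProduct_sub, smul_mulVec, one_mulVec, dotProduct_smul, smul_eq_mul]
  have habs : |x| ⬝ᵥ |x| = x ⬝ᵥ x := by simp [dotProduct, abs_mul_abs_self]
  -- `x` is a zero of the quadratic form of `r • 1 - A`, and `|x|` does no worse
  have hzero : star |x| ⬝ᵥ ((r • 1 - A) *ᵥ |x|) = 0 := by
    refine le_antisymm ?_ (hPSD.dotProduct_mulVec_nonneg _)
    rw [star_trivial, quadratic_form, habs]
    have := dotProduct_mulVec_le_abs hA_nonneg x
    rw [hx, dotProduct_smul, smul_eq_mul] at this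
    linarith
  have hker := (hPSD.dotProduct_mulVec_zero_iff |x|).1 hzero
  rw [sub_mulVec, smul_mulVec, one_mulVec, sub_eq_zero] at hker
  exact ⟨|x|, by simpa using hx0, abs_nonneg x, hker.symm⟩

end Real

section Partition

variable {ι κ R : Type*} [DecidableEq κ]

def partitionMatrix [Zero R] [One R] (p : ι → κ) : Matrix ι κ R :=
  of fun i c => if p i = c then 1 else 0

variable [NonAssocSemiring R] (p : ι → κ)

theorem mul_partitionMatrix_apply [Fintype ι] {m : Type*} (A : Matrix m ι R) (i : m) (c : κ) :
    (A * (partitionMatrix p : Matrix ι κ R)) i c =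
      ∑ j ∈ univ.filter (fun j => p j = c), A i j := by
  simp [partitionMatrix, mul_apply, sum_filter]

theorem partitionMatrix_mul_apply [Fintype κ] {m : Type*} (B : Matrix κ m R) (i : ι) (c : m) :
    ((partitionMatrix p : Matrix ι κ R) * B) i c = B (p i) c := by
  simp [partitionMatrix, mul_apply]

theorem partitionMatrix_mulVec [Fintype κ] (w : κ → R) : partitionMatrix p *ᵥ w = w ∘ p := by
  ext i
  simp [partitionMatrix, mulVec, dotProduct]

theorem vecMul_partitionMatrix_apply [Fintype ι] (y : ι → R) (c : κ) :
    (y ᵥ* partitionMatrix p) c = ∑ i ∈ univ.filter (fun i => p i = c), y i := by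
  simp [partitionMatrix, vecMul, dotProduct, sum_filter]

theorem partitionMatrix_mulVec_injective [Fintype κ] (hp : Function.Surjective p) :
    Function.Injective (partitionMatrix p : Matrix ι κ R).mulVec := by
  intro v w h
  simp only [partitionMatrix_mulVec] at h
  exact hp.injective_comp_right h

theorem vecMul_partitionMatrix_ne_zero [Fintype ι] [PartialOrder R] [IsOrderedAddMonoid R]
    {y : ι → R} (hy_nonneg : 0 ≤ y) (hy_ne : y ≠ 0) :
    y ᵥ* (partitionMatrix p : Matrix ι κ R) ≠ 0 := by
  obtain ⟨i, hi⟩ := Function.ne_iff.1 hy_ne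
  intro h
  have : y i ≤ (y ᵥ* (partitionMatrix p : Matrix ι κ R)) (p i) := by
    rw [vecMul_partitionMatrix_apply]
    exact single_le_sum (fun j _ => hy_nonneg j) (by simp)
  rw [h] at this
  exact hi (le_antisymm this (hy_nonneg i))

theorem mul_partitionMatrix_eq_partitionMatrix_mul [Fintype ι] [Fintype κ] {A : Matrix ι ι R}
    {B : Matrix κ κ R} (h : ∀ i c, ∑ j ∈ univ.filter (fun j => p j = c), A i j = B (p i) c) :
    A * (partitionMatrix p : Matrix ι κ R) = (partitionMatrix p : Matrix ι κ R) * B := by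
  ext i c
  rw [mul_partitionMatrix_apply, partitionMatrix_mul_apply, h]

end Partition

section Intertwining

variable {ι κ K : Type*} [Fintype ι] [Fintype κ] [DecidableEq κ] [Field K]
  {A : Matrix ι ι K} {B : Matrix κ κ K} {P : Matrix ι κ K}

theorem spectrum_subset_of_mul_eq_mul [DecidableEq ι] (h : A * P = P * B)
    (hP : Function.Injective P.mulVec) :
    spectrum K B ⊆ spectrum K A := by
  intro μ hμ
  obtain ⟨w, hw0, hw⟩ := (mem_spectrum_iff_exists_mulVec_eq_smul B μ).1 hμ
  refine (mem_spectrum_iff_exists_mulVec_eq_smul A μ).2 ⟨P *ᵥ w, ?_, ?_⟩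
  · exact fun h0 => hw0 (hP (h0.trans (mulVec_zero P).symm))
  · rw [mulVec_mulVec, h, ← mulVec_mulVec, hw, mulVec_smul]

theorem mem_spectrum_of_mul_eq_mul_of_vecMul_eq_smul (h : A * P = P * B) {y : ι → K} {μ : K}
    (hy : y ᵥ* A = μ • y) (hyP : y ᵥ* P ≠ 0) : μ ∈ spectrum K B :=
  (mem_spectrum_iff_exists_vecMul_eq_smul B μ).2
    ⟨y ᵥ* P, hyP, by rw [vecMul_vecMul, ← h, ← vecMul_vecMul, hy, smul_vecMul]⟩

end Intertwining

end Matrix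

theorem stmt_9_general {n k : ℕ} (M : Matrix (Fin n) (Fin n) ℝ) (hM : M.IsSymm)
    (hnonneg : ∀ i j, 0 ≤ M i j)
    (p : Fin n → Fin k) (hp : Function.Surjective p)
    (B : Matrix (Fin k) (Fin k) ℝ)
    (hB : ∀ (i : Fin n) (j : Fin k),
      ∑ y ∈ Finset.univ.filter (fun y => p y = j), M i y = B (p i) j) :
    sSup (spectrum ℝ B) = sSup (spectrum ℝ M) := by
  have hMP := mul_partitionMatrix_eq_partitionMatrix_mul p hB
  have hsub : spectrum ℝ B ⊆ spectrum ℝ M :=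
    spectrum_subset_of_mul_eq_mul hMP (partitionMatrix_mulVec_injective p hp)
  rcases (spectrum ℝ M).eq_empty_or_nonempty with hempty | hne
  · rw [hempty, Set.subset_empty_iff.1 (hsub.trans hempty.subset)]
  obtain ⟨y, hy_ne, hy_nonneg, hy⟩ := exists_nonneg_mulVec_eq_sSup_spectrum_smul hM hnonneg hne
  have hmax : sSup (spectrum ℝ M) ∈ spectrum ℝ B :=
    mem_spectrum_of_mul_eq_mul_of_vecMul_eq_smul hMP (by rw [← mulVec_transpose, hM, hy])
      (vecMul_partitionMatrix_ne_zero p hy_nonneg hy_ne)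
  have hbdd := (finite_spectrum M).bddAbove
  exact le_antisymm (csSup_le_csSup hbdd ⟨_, hmax⟩ hsub) (le_csSup (hbdd.mono hsub) hmax)

theorem stmt_9 {n k : ℕ} (M : Matrix (Fin n) (Fin n) ℝ) (hM : M.IsSymm)
    (hnonneg : ∀ i j, 0 ≤ M i j)
    (hirr : ∀ i j : Fin n, ∃ m : ℕ, 0 < (M ^ m) i j)
    (p : Fin n → Fin k) (hp : Function.Surjective p)
    (B : Matrix (Fin k) (Fin k) ℝ)
    (hB : ∀ (i : Fin n) (j : Fin k),
      ∑ y ∈ Finset.univ.filter (fun y => p y = j), M i y = B (p i) j) :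
    sSup (spectrum ℝ B) = sSup (spectrum ℝ M) :=
  stmt_9_general M hM hnonneg p hp B hB
end
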